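/- Let γ > 0 and let ψ ∈ L²(ℝ, ℂ) be such that x ↦ x·ψ(x) is also in L²(ℝ, ℂ). Then for every z ∈ ℂ, (γ²/(2√2))·(d/dz)(𝔅_γψ)(z) + √2·z·𝔅_γψ(z) = 𝔅_γ[x ↦ x·ψ(x)](z); that is, the position operator X(ψ)(x) = x·ψ(x) is intertwined by 𝔅_γ with the operator (γ²/(2√2))·d/dz + √2·M_z on the RBF space. -/

import Mathlib

open MeasureTheory Complex

/-- The RBF Segal–Bargmann transform
`𝔅_γψ(z) = (2/(πγ²))^{1/4} ∫_ℝ exp(−(x − √2 z)²/γ²) ψ(x) dx`. -/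
noncomputable def rbfSB (γ : ℝ) (ψ : ℝ → ℂ) (z : ℂ) : ℂ :=
  (((2 / (Real.pi * γ ^ 2)) ^ ((1 : ℝ) / 4) : ℝ) : ℂ) *
    ∫ x : ℝ, Complex.exp (-((x : ℂ) - (Real.sqrt 2 : ℂ) * z) ^ 2 / (γ : ℂ) ^ 2) * ψ x

/-!
In the variable `w = √2 z` the kernel `K(w, x) = exp (-(x - w)² / γ²)` satisfies
`(γ² / 2) ∂_w K = (x - w) K`, so `(γ² / 2) ∂_w + w` turns `K` into `x K`, and `d/dz = √2 d/dw`.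
Differentiating under the integral sign is legitimate because for `|w - w₀| < 1` the integrand
`∂_w K(w, x) ψ(x)` is dominated by a fixed Gaussian in `x` times `|x ψ(x)| + (|w₀| + 1) |ψ(x)|`,
which is integrable by Cauchy–Schwarz.
-/

noncomputable def gaussKernel (γ : ℝ) (w : ℂ) (x : ℝ) : ℂ :=
  cexp (-((x : ℂ) - w) ^ 2 / (γ : ℂ) ^ 2)

lemma continuous_gaussKernel (γ : ℝ) (w : ℂ) : Continuous (gaussKernel γ w) := by
  unfold gaussKernel
  fun_prop

lemma norm_gaussKernel (γ : ℝ) (w : ℂ) (x : ℝ) :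
    ‖gaussKernel γ w x‖ = Real.exp ((w.im ^ 2 - (x - w.re) ^ 2) / γ ^ 2) := by
  rw [gaussKernel, Complex.norm_exp]
  congr 1
  rw [← ofReal_pow, div_ofReal_re]
  simp only [neg_re, sq, mul_re, sub_re, ofReal_re, sub_im, ofReal_im]
  ring

lemma norm_gaussKernel_le {w w₀ : ℂ} (hw : dist w w₀ < 1) (γ : ℝ) (x : ℝ) :
    ‖gaussKernel γ w x‖ ≤ Real.exp (((|w₀.im| + 1) ^ 2 + 1) / γ ^ 2) *
      Real.exp (-(1 / (2 * γ ^ 2)) * (x - w₀.re) ^ 2) := by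
  rw [dist_eq_norm] at hw
  have hre : |w.re - w₀.re| < 1 := (abs_re_le_norm (w - w₀)).trans_lt hw
  have him : |w.im| ≤ |w₀.im| + 1 := by
    have := (abs_im_le_norm (w - w₀)).trans_lt hw
    rw [sub_im] at this
    linarith [abs_sub_abs_le_abs_sub w.im w₀.im]
  rw [norm_gaussKernel, ← Real.exp_add, Real.exp_le_exp]
  have key : w.im ^ 2 - (x - w.re) ^ 2 ≤ (|w₀.im| + 1) ^ 2 + 1 - (x - w₀.re) ^ 2 / 2 := by
    have h1 : w.im ^ 2 ≤ (|w₀.im| + 1) ^ 2 := by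
      rw [← sq_abs]; exact pow_le_pow_left₀ (abs_nonneg _) him 2
    have h2 : (w.re - w₀.re) ^ 2 ≤ 1 := by
      rw [← sq_abs]; nlinarith [abs_nonneg (w.re - w₀.re)]
    nlinarith [sq_nonneg (x - w.re - (w.re - w₀.re))]
  calc (w.im ^ 2 - (x - w.re) ^ 2) / γ ^ 2
      ≤ ((|w₀.im| + 1) ^ 2 + 1 - (x - w₀.re) ^ 2 / 2) / γ ^ 2 :=
        div_le_div_of_nonneg_right key (sq_nonneg γ)
    _ = _ := by ring

lemma memLp_two_exp_neg_mul_sq_sub {b : ℝ} (hb : 0 < b) (c : ℝ) :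
    MemLp (fun x : ℝ => Real.exp (-b * (x - c) ^ 2)) 2 volume := by
  have hmeas : AEStronglyMeasurable (fun x : ℝ => Real.exp (-b * (x - c) ^ 2)) :=
    (by fun_prop : Continuous _).aestronglyMeasurable
  rw [memLp_two_iff_integrable_sq hmeas]
  refine ((integrable_exp_neg_mul_sq (by linarith : 0 < 2 * b)).comp_sub_right c).congr
    (.of_forall fun x => ?_)
  simp only [← Real.exp_nat_mul]
  ring_nf

lemma memLp_two_gaussKernel {γ : ℝ} (hγ : γ ≠ 0) (w : ℂ) : MemLp (gaussKernel γ w) 2 volume := by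
  have : 0 < γ ^ 2 := by positivity
  refine ((memLp_two_exp_neg_mul_sq_sub (b := 1 / (2 * γ ^ 2)) (by positivity) w.re).const_mul
    (Real.exp (((|w.im| + 1) ^ 2 + 1) / γ ^ 2))).of_le
    (continuous_gaussKernel γ w).aestronglyMeasurable
    (.of_forall fun x => ?_)
  rw [Real.norm_of_nonneg (by positivity)]
  exact norm_gaussKernel_le (by simp) γ x

lemma hasDerivAt_gaussKernel (γ : ℝ) (x : ℝ) (w : ℂ) :
    HasDerivAt (gaussKernel γ · x) (2 * ((x : ℂ) - w) / (γ : ℂ) ^ 2 * gaussKernel γ w x) w := by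
  have h := ((((hasDerivAt_id w).const_sub (x : ℂ)).pow 2).neg.div_const ((γ : ℂ) ^ 2)).cexp
  refine h.congr_deriv ?_
  simp only [gaussKernel, id, Pi.pow_apply, Pi.neg_apply, Nat.cast_ofNat]
  ring

lemma norm_gaussKernel_mul_sub_mul_le {w w₀ : ℂ} (hw : dist w w₀ < 1) (γ x : ℝ) (v : ℂ) :
    ‖gaussKernel γ w x * (((x : ℂ) - w) * v)‖ ≤ Real.exp (((|w₀.im| + 1) ^ 2 + 1) / γ ^ 2) *
      (Real.exp (-(1 / (2 * γ ^ 2)) * (x - w₀.re) ^ 2) * (‖(x : ℂ) * v‖ + (‖w₀‖ + 1) * ‖v‖)) := by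
  have hw' : ‖w‖ ≤ ‖w₀‖ + 1 := by
    linarith [norm_le_norm_add_norm_sub' w w₀, dist_eq_norm w w₀]
  have hxw : ‖((x : ℂ) - w) * v‖ ≤ ‖(x : ℂ) * v‖ + (‖w₀‖ + 1) * ‖v‖ :=
    calc ‖((x : ℂ) - w) * v‖ = ‖(x : ℂ) * v - w * v‖ := by rw [sub_mul]
      _ ≤ ‖(x : ℂ) * v‖ + ‖w‖ * ‖v‖ := by rw [← norm_mul]; exact norm_sub_le _ _
      _ ≤ _ := by gcongr
  rw [norm_mul, ← mul_assoc]
  gcongr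
  exact norm_gaussKernel_le hw γ x

lemma hasDerivAt_integral_gaussKernel_mul {γ : ℝ} (hγ : γ ≠ 0) {ψ : ℝ → ℂ}
    (hψ : MemLp ψ 2 volume) (hxψ : MemLp (fun x : ℝ => (x : ℂ) * ψ x) 2 volume) (w₀ : ℂ) :
    HasDerivAt (fun w => ∫ x, gaussKernel γ w x * ψ x)
      (2 / (γ : ℂ) ^ 2 * ((∫ x, gaussKernel γ w₀ x * ((x : ℂ) * ψ x)) -
        w₀ * ∫ x, gaussKernel γ w₀ x * ψ x)) w₀ := by
  have hint : ∀ w, Integrable (fun x => gaussKernel γ w x * ψ x) := fun w =>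
    (memLp_two_gaussKernel hγ w).integrable_mul hψ
  have hint' : Integrable (fun x => gaussKernel γ w₀ x * ((x : ℂ) * ψ x)) :=
    (memLp_two_gaussKernel hγ w₀).integrable_mul hxψ
  set bound : ℝ → ℝ := fun x => 2 / γ ^ 2 * (Real.exp (((|w₀.im| + 1) ^ 2 + 1) / γ ^ 2) *
    (Real.exp (-(1 / (2 * γ ^ 2)) * (x - w₀.re) ^ 2) * (‖(x : ℂ) * ψ x‖ + (‖w₀‖ + 1) * ‖ψ x‖)))
  have hbound_int : Integrable bound :=
    (((memLp_two_exp_neg_mul_sq_sub (by positivity) w₀.re).integrable_mul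
      (hxψ.norm.add (hψ.norm.const_mul _))).const_mul _).const_mul _
  have hbound : ∀ x, ∀ w ∈ Metric.ball w₀ 1,
      ‖2 / (γ : ℂ) ^ 2 * (gaussKernel γ w x * (((x : ℂ) - w) * ψ x))‖ ≤ bound x := by
    intro x w hw
    rw [norm_mul, norm_div, norm_pow, Complex.norm_real, Real.norm_eq_abs, sq_abs,
      Complex.norm_ofNat]
    exact mul_le_mul_of_nonneg_left (norm_gaussKernel_mul_sub_mul_le hw γ x (ψ x))
      (by positivity)
  have hderiv_meas : AEStronglyMeasurable
      fun x => 2 / (γ : ℂ) ^ 2 * (gaussKernel γ w₀ x * (((x : ℂ) - w₀) * ψ x)) :=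
    ((continuous_gaussKernel γ w₀).aestronglyMeasurable.mul
      ((by fun_prop : Continuous fun x : ℝ => (x : ℂ) - w₀).aestronglyMeasurable.mul
        hψ.1)).const_mul _
  obtain ⟨-, h⟩ := hasDerivAt_integral_of_dominated_loc_of_deriv_le
    (Metric.ball_mem_nhds w₀ one_pos) (.of_forall fun w => (hint w).aestronglyMeasurable)
    (hint w₀) hderiv_meas (.of_forall hbound) hbound_int
    (.of_forall fun x w _ => ((hasDerivAt_gaussKernel γ x w).mul_const (ψ x)).congr_deriv
      (by ring))
  refine h.congr_deriv ?_
  rw [← integral_const_mul w₀, ← integral_sub hint' ((hint w₀).const_mul w₀),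
    ← integral_const_mul]
  congr 1 with x
  ring

lemma rbfSB_eq_integral_gaussKernel (γ : ℝ) (ψ : ℝ → ℂ) (z : ℂ) :
    rbfSB γ ψ z = (((2 / (Real.pi * γ ^ 2)) ^ ((1 : ℝ) / 4) : ℝ) : ℂ) *
      ∫ x, gaussKernel γ (Real.sqrt 2 * z) x * ψ x :=
  rfl

theorem rbfSB_position_operator (γ : ℝ) (hγ : 0 < γ) (ψ : ℝ → ℂ)
    (hψ : MemLp ψ 2 volume)
    (hxψ : MemLp (fun x : ℝ => (x : ℂ) * ψ x) 2 volume) :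
    ∀ z : ℂ,
      ((γ : ℂ) ^ 2 / (2 * (Real.sqrt 2 : ℂ))) * deriv (rbfSB γ ψ) z +
          (Real.sqrt 2 : ℂ) * z * rbfSB γ ψ z =
        rbfSB γ (fun x => (x : ℂ) * ψ x) z := by
  intro z
  have hs : (Real.sqrt 2 : ℂ) ≠ 0 := by simp
  have hγ' : (γ : ℂ) ≠ 0 := by exact_mod_cast hγ.ne'
  have hderiv := (((hasDerivAt_integral_gaussKernel_mul hγ.ne' hψ hxψ (Real.sqrt 2 * z)).comp z
    ((hasDerivAt_id z).const_mul (Real.sqrt 2 : ℂ))).const_mul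
    (((2 / (Real.pi * γ ^ 2)) ^ ((1 : ℝ) / 4) : ℝ) : ℂ))
  rw [HasDerivAt.deriv (f := rbfSB γ ψ) hderiv, rbfSB_eq_integral_gaussKernel,
    rbfSB_eq_integral_gaussKernel]
  field_simp
  ring
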